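/- arXiv:1901.11082 — 3 statements merged into one kernel-verified Lean document; each statement's English description precedes it below -/
import Mathlib

section
/- Let σ_1, ..., σ_{j+1} be pairwise distinct, S_t = e^{-iσ_t}/∏_{l≠t}(σ_t - σ_l), and S = Σ_t S_t. Then ∂S/∂σ_p = -i S_p + Σ_{t ≠ p} (S_t + S_p)/(σ_t - σ_p). -/
/-! Moving `σ_p` to `z` changes `S_p` through `e^{-iz}` and through every factor of its
denominator, so its logarithmic derivative is `-i - Σ_{l≠p} 1/(σ_p - σ_l)`. For `t ≠ p` only
the factor `1/(σ_t - z)` of `S_t` moves, contributing `S_t/(σ_t - σ_p)`. -/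

open Finset

/-- The term `S_t = e^{-iσ_t} / ∏_{l≠t} (σ_t - σ_l)`. -/
noncomputable def simplexTerm {j : ℕ} (σ : Fin (j + 1) → ℂ) (t : Fin (j + 1)) : ℂ :=
  Complex.exp (-Complex.I * σ t) / ∏ l ∈ univ.erase t, (σ t - σ l)

section
variable {ι : Type*} [DecidableEq ι] (s : Finset ι) (a : ι → ℂ) {x : ℂ}

theorem hasDerivAt_prod_sub (hx : ∀ l ∈ s, x ≠ a l) :
    HasDerivAt (fun z => ∏ l ∈ s, (z - a l)) ((∏ l ∈ s, (x - a l)) * ∑ l ∈ s, (x - a l)⁻¹) x := by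
  have h := HasDerivAt.fun_finsetProd (u := s) (f' := fun _ => 1)
    fun l _ => (hasDerivAt_id x).sub_const (a l)
  refine h.congr_deriv ?_
  rw [mul_sum]
  refine sum_congr rfl fun l hl => ?_
  have hxl : x - a l ≠ 0 := sub_ne_zero.mpr (hx l hl)
  rw [← mul_prod_erase s _ hl]
  field_simp
  simp

theorem hasDerivAt_cexp_mul_div_prod_sub (c : ℂ) (hx : ∀ l ∈ s, x ≠ a l) :
    HasDerivAt (fun z => Complex.exp (c * z) / ∏ l ∈ s, (z - a l))
      (Complex.exp (c * x) / (∏ l ∈ s, (x - a l)) * (c - ∑ l ∈ s, (x - a l)⁻¹)) x := by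
  have hexp : HasDerivAt (fun z => Complex.exp (c * z)) (Complex.exp (c * x) * c) x :=
    ((hasDerivAt_id x).const_mul c).cexp.congr_deriv (by simp)
  have hprod : ∏ l ∈ s, (x - a l) ≠ 0 :=
    prod_ne_zero_iff.mpr fun l hl => sub_ne_zero.mpr (hx l hl)
  refine (hexp.div (hasDerivAt_prod_sub s a hx) hprod).congr_deriv ?_
  field_simp

end

theorem simplexTerm_update_self {j : ℕ} (σ : Fin (j + 1) → ℂ) (p : Fin (j + 1)) (z : ℂ) :
    simplexTerm (Function.update σ p z) p =
      Complex.exp (-Complex.I * z) / ∏ l ∈ univ.erase p, (z - σ l) := by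
  simp only [simplexTerm, Function.update_self]
  congr 1
  exact prod_congr rfl fun l hl => by rw [Function.update_of_ne (ne_of_mem_erase hl)]

theorem simplexTerm_update_of_ne {j : ℕ} (σ : Fin (j + 1) → ℂ) {p t : Fin (j + 1)} (htp : t ≠ p)
    (z : ℂ) :
    simplexTerm (Function.update σ p z) t =
      Complex.exp (-Complex.I * σ t) / (∏ l ∈ (univ.erase t).erase p, (σ t - σ l)) *
        (σ t - z)⁻¹ := by
  have hp : p ∈ univ.erase t := mem_erase.mpr ⟨htp.symm, mem_univ p⟩
  rw [simplexTerm, Function.update_of_ne htp, ← mul_prod_erase _ _ hp, Function.update_self,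
    prod_congr rfl fun l hl => by rw [Function.update_of_ne (ne_of_mem_erase hl)], mul_comm,
    div_mul_eq_div_div, div_right_comm, div_eq_mul_inv _ (σ t - z)]

theorem hasDerivAt_simplexTerm_update_self {j : ℕ} {σ : Fin (j + 1) → ℂ} {p : Fin (j + 1)}
    (hp : ∀ l ≠ p, σ l ≠ σ p) :
    HasDerivAt (fun z => simplexTerm (Function.update σ p z) p)
      (-Complex.I * simplexTerm σ p + ∑ l ∈ univ.erase p, simplexTerm σ p / (σ l - σ p)) (σ p) := by
  simp_rw [simplexTerm_update_self]
  convert hasDerivAt_cexp_mul_div_prod_sub (univ.erase p) σ (-Complex.I)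
    fun l hl => (hp l (ne_of_mem_erase hl)).symm using 1
  rw [← simplexTerm, mul_sub, mul_sum, sub_eq_add_neg, ← sum_neg_distrib, mul_comm]
  congr 1
  refine sum_congr rfl fun l _ => ?_
  rw [← mul_neg, ← inv_neg, neg_sub, div_eq_mul_inv]

theorem hasDerivAt_simplexTerm_update_of_ne {j : ℕ} {σ : Fin (j + 1) → ℂ} {p t : Fin (j + 1)}
    (htp : σ t ≠ σ p) :
    HasDerivAt (fun z => simplexTerm (Function.update σ p z) t)
      (simplexTerm σ t / (σ t - σ p)) (σ p) := by
  have hne : t ≠ p := fun h => htp (congrArg σ h)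
  have hval := simplexTerm_update_of_ne σ hne (σ p)
  rw [Function.update_eq_self] at hval
  simp_rw [simplexTerm_update_of_ne σ hne]
  refine ((((hasDerivAt_id (σ p)).const_sub (σ t)).inv (sub_ne_zero.mpr htp)).const_mul
    (Complex.exp (-Complex.I * σ t) / (∏ l ∈ (univ.erase t).erase p, (σ t - σ l)))).congr_deriv ?_
  simp only [id, neg_neg, one_div, ← inv_pow, hval]
  ring

/-- The partial derivative of `S = Σ_t S_t` with respect to σ_p equals
`-i S_p + Σ_{t ≠ p} (S_t + S_p)/(σ_t - σ_p)`. -/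
theorem deriv_simplexSum {j : ℕ} (σ : Fin (j + 1) → ℂ)
    (hσ : Function.Injective σ) (p : Fin (j + 1)) :
    HasDerivAt (fun z => ∑ t, simplexTerm (Function.update σ p z) t)
      (-Complex.I * simplexTerm σ p +
        ∑ t ∈ univ.erase p, (simplexTerm σ t + simplexTerm σ p) / (σ t - σ p))
      (σ p) := by
  have hself := hasDerivAt_simplexTerm_update_self (p := p) fun l hl => hσ.ne hl
  have hrest := HasDerivAt.fun_sum fun t (ht : t ∈ univ.erase p) =>
    hasDerivAt_simplexTerm_update_of_ne (σ := σ) (hσ.ne (ne_of_mem_erase ht))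
  simp_rw [← add_sum_erase univ _ (mem_univ p)]
  refine (hself.add hrest).congr_deriv ?_
  rw [add_assoc, ← sum_add_distrib]
  exact congrArg _ (sum_congr rfl fun t _ => by rw [add_div, add_comm])
end

section
/- For a non-degenerate 1-simplex (line segment) with endpoints x_1, x_2 ∈ ℝ^d and density ρ, the line integral ∫ ρ e^{-i k·x} ds over the segment equals ρ · i · |x_2 - x_1| · (e^{-iσ_1}/(σ_1 - σ_2) + e^{-iσ_2}/(σ_2 - σ_1)), where σ_t = k · x_t, provided σ_1 ≠ σ_2. -/
open Complex

theorem integral_cexp_neg_I_mul_segment {a b : ℂ} (hab : a ≠ b) :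
    ∫ s in (0:ℝ)..1, cexp (-I * ((1 - s) * a + s * b)) =
      I * (cexp (-I * a) / (a - b) + cexp (-I * b) / (b - a)) := by
  have hba : b - a ≠ 0 := sub_ne_zero.2 hab.symm
  -- `s ↦ i e^{-i((1-s)a + sb)} / (b - a)` is an antiderivative of the integrand.
  have hderiv (s : ℝ) :
      HasDerivAt (fun t : ℝ => I * cexp (-I * ((1 - t) * a + t * b)) / (b - a))
        (cexp (-I * ((1 - s) * a + s * b))) s := by
    have hlin : HasDerivAt (fun z : ℂ => -I * ((1 - z) * a + z * b)) (-I * (b - a)) s :=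
      ((((hasDerivAt_id (s : ℂ)).const_sub 1).mul_const a).add
        ((hasDerivAt_id (s : ℂ)).mul_const b) |>.const_mul (-I)).congr_deriv (by ring)
    refine ((hlin.comp_ofReal.cexp.const_mul I).div_const (b - a)).congr_deriv ?_
    field_simp
    linear_combination (-1 : ℂ) * I_sq
  rw [intervalIntegral.integral_eq_sub_of_hasDerivAt (fun s _ => hderiv s)
    (by apply Continuous.intervalIntegrable; fun_prop), ← neg_sub b a, div_neg]
  push_cast
  ring_nf

theorem nuft_segment_general (d : ℕ) (x₁ x₂ k : EuclideanSpace ℝ (Fin d)) (ρ : ℝ)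
    (hσ : (inner ℝ k x₁ : ℝ) ≠ (inner ℝ k x₂ : ℝ)) :
    (∫ s in (0:ℝ)..1,
        (ρ : ℂ) * Complex.exp (-Complex.I *
          (((inner ℝ k ((1 - s) • x₁ + s • x₂) : ℝ)) : ℂ)) * (‖x₂ - x₁‖ : ℂ)) =
      (ρ : ℂ) * Complex.I * (‖x₂ - x₁‖ : ℂ) *
        (Complex.exp (-Complex.I * ((inner ℝ k x₁ : ℝ) : ℂ)) /
            (((inner ℝ k x₁ : ℝ) : ℂ) - ((inner ℝ k x₂ : ℝ) : ℂ)) +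
          Complex.exp (-Complex.I * ((inner ℝ k x₂ : ℝ) : ℂ)) /
            (((inner ℝ k x₂ : ℝ) : ℂ) - ((inner ℝ k x₁ : ℝ) : ℂ))) := by
  simp only [inner_add_right, real_inner_smul_right, ofReal_add, ofReal_mul, ofReal_sub,
    ofReal_one]
  rw [intervalIntegral.integral_mul_const, intervalIntegral.integral_const_mul,
    integral_cexp_neg_I_mul_segment (ofReal_injective.ne hσ)]
  ring

/-- NUFT of a constant density over a non-degenerate line segment: parameterizing the
segment `x(s) = (1-s)x₁ + s x₂`, the line integral `∫ ρ e^{-i k·x} ds` (arc-length)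
equals `ρ i ‖x₂ - x₁‖ (e^{-iσ₁}/(σ₁-σ₂) + e^{-iσ₂}/(σ₂-σ₁))` where `σ_t = k·x_t`. -/
theorem nuft_segment (d : ℕ) (x₁ x₂ k : EuclideanSpace ℝ (Fin d)) (ρ : ℝ)
    (hx : x₁ ≠ x₂)
    (hσ : (inner ℝ k x₁ : ℝ) ≠ (inner ℝ k x₂ : ℝ)) :
    (∫ s in (0:ℝ)..1,
        (ρ : ℂ) * Complex.exp (-Complex.I *
          (((inner ℝ k ((1 - s) • x₁ + s • x₂) : ℝ)) : ℂ)) * (‖x₂ - x₁‖ : ℂ)) =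
      (ρ : ℂ) * Complex.I * (‖x₂ - x₁‖ : ℂ) *
        (Complex.exp (-Complex.I * ((inner ℝ k x₁ : ℝ) : ℂ)) /
            (((inner ℝ k x₁ : ℝ) : ℂ) - ((inner ℝ k x₂ : ℝ) : ℂ)) +
          Complex.exp (-Complex.I * ((inner ℝ k x₂ : ℝ) : ℂ)) /
            (((inner ℝ k x₂ : ℝ) : ℂ) - ((inner ℝ k x₁ : ℝ) : ℂ))) :=
  nuft_segment_general d x₁ x₂ k ρ hσ
end

section
/- For pairwise distinct reals σ_1, σ_2, σ_3, the integral of e^{-i(θ_1σ_1 + θ_2σ_2 + θ_3σ_3)} over the standard 2-simplex {θ_i ≥ 0, θ_1+θ_2+θ_3 = 1} (with respect to the 2-dimensional measure normalized so the simplex has measure 1/2) equals i² · Σ_{t=1}^{3} e^{-iσ_t}/∏_{l≠t}(σ_t - σ_l). -/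
open Finset MeasureTheory

set_option maxHeartbeats 1000000 in
/-- For pairwise distinct reals σ₁, σ₂, σ₃, the integral of
`e^{-i(θ₁σ₁ + θ₂σ₂ + θ₃σ₃)}` over the standard 2-simplex (parameterized by
`(θ₁, θ₂)` with `θ₃ = 1 - θ₁ - θ₂`, Lebesgue measure on ℝ²) equals
`i² Σ_t e^{-iσ_t} / ∏_{l≠t}(σ_t - σ_l)`. -/
theorem nuft_std_two_simplex (σ : Fin 3 → ℝ) (hσ : Function.Injective σ) :
    (∫ θ in {p : ℝ × ℝ | 0 ≤ p.1 ∧ 0 ≤ p.2 ∧ p.1 + p.2 ≤ 1},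
        Complex.exp (-Complex.I *
          ((θ.1 * σ 0 + θ.2 * σ 1 + (1 - θ.1 - θ.2) * σ 2 : ℝ) : ℂ))) =
      Complex.I ^ 2 * ∑ t, Complex.exp (-Complex.I * (σ t : ℂ)) /
        ∏ l ∈ univ.erase t, ((σ t : ℂ) - (σ l : ℂ)) := by
  classical
  set f : ℝ × ℝ → ℂ := fun θ => Complex.exp (-Complex.I *
      ((θ.1 * σ 0 + θ.2 * σ 1 + (1 - θ.1 - θ.2) * σ 2 : ℝ) : ℂ)) with hf
  set S : Set (ℝ × ℝ) := {p : ℝ × ℝ | 0 ≤ p.1 ∧ 0 ≤ p.2 ∧ p.1 + p.2 ≤ 1} with hSdef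
  -- nonzero facts
  have h01 : (σ 0 : ℂ) - σ 1 ≠ 0 := sub_ne_zero.2 (by
    exact_mod_cast fun h => (by decide : (0:Fin 3) ≠ 1) (hσ (Complex.ofReal_injective h)))
  have h02 : (σ 0 : ℂ) - σ 2 ≠ 0 := sub_ne_zero.2 (by
    exact_mod_cast fun h => (by decide : (0:Fin 3) ≠ 2) (hσ (Complex.ofReal_injective h)))
  have h12 : (σ 1 : ℂ) - σ 2 ≠ 0 := sub_ne_zero.2 (by
    exact_mod_cast fun h => (by decide : (1:Fin 3) ≠ 2) (hσ (Complex.ofReal_injective h)))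
  set a : ℂ := -Complex.I * ((σ 0 : ℂ) - σ 2) with ha_def
  set b : ℂ := -Complex.I * ((σ 1 : ℂ) - σ 2) with hb_def
  have hI : (-Complex.I) ≠ 0 := neg_ne_zero.2 Complex.I_ne_zero
  have ha : a ≠ 0 := mul_ne_zero hI h02
  have hb : b ≠ 0 := mul_ne_zero hI h12
  have hab : a - b ≠ 0 := by
    have : a - b = -Complex.I * ((σ 0 : ℂ) - σ 1) := by rw [ha_def, hb_def]; ring
    rw [this]; exact mul_ne_zero hI h01
  -- measurability and integrability
  have hSm : MeasurableSet S := by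
    apply MeasurableSet.inter (measurableSet_le measurable_const measurable_fst)
    exact (measurableSet_le measurable_const measurable_snd).inter
      (measurableSet_le (measurable_fst.add measurable_snd) measurable_const)
  have hfc : Continuous f := by fun_prop
  have hScompact : IsCompact S := by
    apply (isCompact_Icc (a := ((0:ℝ),(0:ℝ))) (b := ((1:ℝ),(1:ℝ)))).of_isClosed_subset
    · apply IsClosed.inter (isClosed_le continuous_const continuous_fst)
      exact (isClosed_le continuous_const continuous_snd).inter
        (isClosed_le (continuous_fst.add continuous_snd) continuous_const)
    · rintro ⟨x, y⟩ ⟨hx, hy, hxy⟩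
      simp only [Set.mem_Icc, Prod.mk_le_mk] at *
      refine ⟨⟨hx, hy⟩, by constructor <;> linarith⟩
  have hint : IntegrableOn f S := hfc.continuousOn.integrableOn_compact hScompact
  have hind : Integrable (S.indicator f) := (integrable_indicator_iff hSm).2 hint
  -- turn into iterated integral
  have step1 : (∫ θ in S, f θ) = ∫ x : ℝ, ∫ y : ℝ, S.indicator f (x, y) := by
    rw [← integral_indicator hSm]
    rw [show (volume : Measure (ℝ × ℝ)) = (volume : Measure ℝ).prod volume from
      Measure.volume_eq_prod ℝ ℝ] at hind ⊢
    exact integral_prod _ hind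
  -- inner indicator as section
  have step2 : ∀ x : ℝ, (∫ y : ℝ, S.indicator f (x, y)) =
      (Set.Icc (0:ℝ) 1).indicator (fun x => ∫ y in Set.Icc (0:ℝ) (1 - x), f (x, y)) x := by
    intro x
    by_cases hx : 0 ≤ x
    · have : (fun y => S.indicator f (x, y)) =
          (Set.Icc (0:ℝ) (1 - x)).indicator (fun y => f (x, y)) := by
        funext y
        by_cases hy : y ∈ Set.Icc (0:ℝ) (1 - x)
        · rw [Set.indicator_of_mem hy]
          exact Set.indicator_of_mem (show (x, y) ∈ S from ⟨hx, hy.1, by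
            have := hy.2; simp only; linarith⟩) _
        · rw [Set.indicator_of_notMem hy, Set.indicator_of_notMem]
          intro hm
          obtain ⟨-, h1, h2⟩ := hm
          simp only at h1 h2
          exact hy ⟨h1, by linarith⟩
      rw [this, integral_indicator measurableSet_Icc]
      by_cases hx1 : x ≤ 1
      · rw [Set.indicator_of_mem (Set.mem_Icc.2 ⟨hx, hx1⟩)]
      · rw [Set.indicator_of_notMem (by simp [hx1])]
        rw [Set.Icc_eq_empty (by intro h; exact hx1 (by linarith [h]))]
        simp
    · rw [Set.indicator_of_notMem (by simp [hx])]
      have : (fun y => S.indicator f (x, y)) = fun _ => 0 := by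
        funext y
        exact Set.indicator_of_notMem (fun h => hx h.1) _
      rw [this, integral_zero]
  -- compute inner integral for x ∈ [0,1]
  have key : ∀ x ∈ Set.Icc (0:ℝ) 1, (∫ y in Set.Icc (0:ℝ) (1 - x), f (x, y)) =
      (Complex.exp (-Complex.I * σ 1) * Complex.exp ((a - b) * x)
        - Complex.exp (-Complex.I * σ 2) * Complex.exp (a * x)) / b := by
    intro x hx
    have hexp : ∀ y : ℝ, (-Complex.I *
        ((x * σ 0 + y * σ 1 + (1 - x - y) * σ 2 : ℝ) : ℂ)) =
        (-Complex.I * σ 2 + a * x) + b * y := by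
      intro y; rw [ha_def, hb_def]; push_cast; ring
    have hfxy : ∀ y : ℝ, f (x, y) =
        (Complex.exp (-Complex.I * σ 2) * Complex.exp (a * x)) * Complex.exp (b * y) := by
      intro y
      simp only [hf]
      rw [hexp y, Complex.exp_add, Complex.exp_add]
    simp_rw [hfxy]
    rw [integral_Icc_eq_integral_Ioc, ← intervalIntegral.integral_of_le (by linarith [hx.2]),
      intervalIntegral.integral_const_mul, integral_exp_mul_complex hb]
    have h0 : b * ((0:ℝ):ℂ) = 0 := by push_cast; ring
    rw [h0, Complex.exp_zero]
    have e1 : Complex.exp (-Complex.I * σ 2) * Complex.exp (a * x) *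
        Complex.exp (b * ((1 - x : ℝ) : ℂ)) =
        Complex.exp (-Complex.I * σ 1) * Complex.exp ((a - b) * x) := by
      rw [← Complex.exp_add, ← Complex.exp_add, ← Complex.exp_add]
      congr 1
      rw [ha_def, hb_def]; push_cast; ring
    field_simp
    push_cast at e1 ⊢
    simp only [neg_mul] at e1 ⊢
    linear_combination (norm := ring_nf) e1
  set E0 : ℂ := Complex.exp (-Complex.I * σ 0) with hE0
  set E1 : ℂ := Complex.exp (-Complex.I * σ 1) with hE1
  set E2 : ℂ := Complex.exp (-Complex.I * σ 2) with hE2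
  have hX : Complex.exp (a - b) = E0 * E1⁻¹ := by
    rw [hE0, hE1, ← Complex.exp_neg, ← Complex.exp_add, ha_def, hb_def]
    congr 1; push_cast; ring
  have hY : Complex.exp a = E0 * E2⁻¹ := by
    rw [hE0, hE2, ← Complex.exp_neg, ← Complex.exp_add, ha_def]
    congr 1; push_cast; ring
  have hE0ne : E0 ≠ 0 := hE0 ▸ Complex.exp_ne_zero _
  have hE1ne : E1 ≠ 0 := hE1 ▸ Complex.exp_ne_zero _
  have hE2ne : E2 ≠ 0 := hE2 ▸ Complex.exp_ne_zero _
  clear_value a b E0 E1 E2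
  have lhs_eq : (∫ θ in S, f θ) =
      E0 / (a * (a - b)) - E1 / (b * (a - b)) + E2 / (a * b) := by
    rw [step1]
    simp_rw [step2]
    rw [integral_indicator measurableSet_Icc,
      setIntegral_congr_fun measurableSet_Icc key,
      integral_Icc_eq_integral_Ioc, ← intervalIntegral.integral_of_le zero_le_one]
    have hsplit : ∀ x : ℝ, (E1 * Complex.exp ((a - b) * x)
        - E2 * Complex.exp (a * x)) / b =
        E1 / b * Complex.exp ((a - b) * x) - E2 / b * Complex.exp (a * x) := by
      intro x; ring
    simp_rw [hsplit]
    rw [intervalIntegral.integral_sub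
      ((by fun_prop :
        Continuous fun x : ℝ => E1 / b * Complex.exp ((a - b) * (x : ℂ))).intervalIntegrable 0 1)
      ((by fun_prop :
        Continuous fun x : ℝ => E2 / b * Complex.exp (a * (x : ℂ))).intervalIntegrable 0 1),
      intervalIntegral.integral_const_mul, intervalIntegral.integral_const_mul,
      integral_exp_mul_complex hab, integral_exp_mul_complex ha]
    push_cast
    rw [mul_one, mul_one, mul_zero, mul_zero, Complex.exp_zero, hX, hY]
    field_simp
    ring
  have hA : a * (a - b) = -(((σ 0 : ℂ) - σ 1) * ((σ 0 : ℂ) - σ 2)) := by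
    rw [ha_def, hb_def]
    linear_combination (((σ 0 : ℂ) - σ 1) * ((σ 0 : ℂ) - σ 2)) * Complex.I_sq
  have hB : b * (a - b) = ((σ 1 : ℂ) - σ 0) * ((σ 1 : ℂ) - σ 2) := by
    rw [ha_def, hb_def]
    linear_combination (((σ 0 : ℂ) - σ 1) * ((σ 1 : ℂ) - σ 2)) * Complex.I_sq
  have hC : a * b = -(((σ 2 : ℂ) - σ 0) * ((σ 2 : ℂ) - σ 1)) := by
    rw [ha_def, hb_def]
    linear_combination (((σ 0 : ℂ) - σ 2) * ((σ 1 : ℂ) - σ 2)) * Complex.I_sq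
  rw [lhs_eq, Fin.sum_univ_three, ← hE0, ← hE1, ← hE2,
    show (univ.erase (0 : Fin 3)) = {1, 2} from by decide,
    show (univ.erase (1 : Fin 3)) = {0, 2} from by decide,
    show (univ.erase (2 : Fin 3)) = {0, 1} from by decide,
    Finset.prod_pair (by decide), Finset.prod_pair (by decide),
    Finset.prod_pair (by decide), hA, hB, hC, Complex.I_sq]
  have h10 : (σ 1 : ℂ) - σ 0 ≠ 0 := fun h => h01 (by linear_combination -h)
  have h20 : (σ 2 : ℂ) - σ 0 ≠ 0 := fun h => h02 (by linear_combination -h)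
  have h21 : (σ 2 : ℂ) - σ 1 ≠ 0 := fun h => h12 (by linear_combination -h)
  field_simp
  ring
end
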